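/- arXiv:cs/0501074 — 3 statements merged into one kernel-verified Lean document; each statement's English description precedes it below -/
import Mathlib

section
/- Let A ∈ K^{n×n}, v ∈ K^n, and let P be the minimal polynomial of the sequence (A^i v)_i, of degree k. Suppose there exists an invertible n×n matrix X̄ whose first k rows are (A^{i}v)^T for i = 0,...,k-1. Then X̄ A^T X̄^{-1} is block lower triangular with upper-left k×k block equal to C_P^T, the transpose of the companion matrix of P. Consequently, the characteristic polynomial of A equals P times the characteristic polynomial of the lower-right (n-k)×(n-k) block of X̄ A^T X̄^{-1}. -/
open Polynomial Matrix

/-!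
Row `i` of `X * Aᵀ` is `A ^ (i + 1) *ᵥ v`. For `i + 1 < k` this is row `i + 1` of `X`, and for
`i + 1 = k` the relation `P(A) v = 0` writes it as `-∑ l < k, P.coeff l • A ^ l *ᵥ v`, a
combination of the first `k` rows of `X`. Multiplying by `X⁻¹` on the right reads off the
coefficients, so the first `k` rows of `X * Aᵀ * X⁻¹` are those of `C_Pᵀ` followed by zeros, and
the characteristic polynomial factors along this block triangular form. Finally `χ(C_P) = P`
since `C_P` is the matrix of multiplication by the root of `P` on `K[X] ⧸ (P)`.
-/

namespace Polynomial

variable {R : Type*} [CommRing R]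

/-- The companion matrix `C_P`, with the negated coefficients in the last column, as in
`PowerBasis.leftMulMatrix`. -/
def companion (P : R[X]) : Matrix (Fin P.natDegree) (Fin P.natDegree) R :=
  Matrix.of fun i j =>
    if (j : ℕ) + 1 = P.natDegree then -P.coeff i else if (i : ℕ) = j + 1 then 1 else 0

theorem charpoly_companion {K : Type*} [Field K] {P : K[X]} (hP : P.Monic) :
    P.companion.charpoly = P := by
  have hmin : minpoly K (AdjoinRoot.root P) = P := by
    rw [AdjoinRoot.minpoly_root hP.ne_zero, hP.leadingCoeff, inv_one, map_one, mul_one]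
  have hmat : P.companion = Algebra.leftMulMatrix (AdjoinRoot.powerBasis' hP).basis
      (AdjoinRoot.powerBasis' hP).gen := by
    rw [PowerBasis.leftMulMatrix, PowerBasis.minpolyGen_eq]
    simp only [AdjoinRoot.powerBasis'_gen, hmin]
    rfl
  rw [hmat]
  exact (charpoly_leftMulMatrix (AdjoinRoot.powerBasis' hP)).trans hmin

end Polynomial

theorem Fin.sum_ite_lt_eq_sum_range {M : Type*} [AddCommMonoid M] {n k : ℕ} (hk : k ≤ n)
    (f : ℕ → M) :
    ∑ j : Fin n, (if (j : ℕ) < k then f j else 0) = ∑ l ∈ Finset.range k, f l := by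
  rw [Fin.sum_univ_eq_sum_range (fun j => if j < k then f j else 0), ← Finset.sum_filter]
  congr 1
  ext l
  simp only [Finset.mem_filter, Finset.mem_range]
  omega

namespace Matrix

variable {R : Type*} [CommRing R]

theorem mul_mul_inv_row_eq {m : Type*} [Fintype m] [DecidableEq m] {X B : Matrix m m R}
    (hX : IsUnit X.det) {i : m} {c : m → R} (h : (X * B) i = c ᵥ* X) :
    (X * B * X⁻¹) i = c := by
  rw [mul_apply_eq_vecMul, h, vecMul_vecMul, mul_nonsing_inv _ hX, vecMul_one]

theorem pow_natDegree_mulVec_eq_neg_sum {m : Type*} [Fintype m] [DecidableEq m]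
    {A : Matrix m m R} {v : m → R} {P : R[X]} (hP : P.Monic) (hann : aeval A P *ᵥ v = 0) :
    (A ^ P.natDegree) *ᵥ v = -∑ i ∈ Finset.range P.natDegree, P.coeff i • ((A ^ i) *ᵥ v) := by
  rw [hP.as_sum] at hann
  simp only [map_add, map_sum, map_mul, map_pow, aeval_X, aeval_C, ← Algebra.smul_def,
    add_mulVec, sum_mulVec, smul_mulVec] at hann
  exact eq_neg_of_add_eq_zero_left hann

theorem charpoly_eq_mul_of_upper_right_eq_zero {n k : ℕ} (hk : k ≤ n)
    (M : Matrix (Fin n) (Fin n) R) (h : ∀ i j : Fin n, (i : ℕ) < k → k ≤ (j : ℕ) → M i j = 0) :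
    M.charpoly = (Matrix.of fun i j : Fin k => M ⟨i, by omega⟩ ⟨j, by omega⟩).charpoly *
      (Matrix.of fun i j : Fin (n - k) => M ⟨k + i, by omega⟩ ⟨k + j, by omega⟩).charpoly := by
  let e : Fin k ⊕ Fin (n - k) ≃ Fin n := finSumFinEquiv.trans (finCongr (by omega))
  have hblocks : reindex e.symm e.symm M =
      fromBlocks (Matrix.of fun i j : Fin k => M ⟨i, by omega⟩ ⟨j, by omega⟩) 0
      (Matrix.of fun (i : Fin (n - k)) (j : Fin k) => M ⟨k + i, by omega⟩ ⟨j, by omega⟩)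
      (Matrix.of fun i j : Fin (n - k) => M ⟨k + i, by omega⟩ ⟨k + j, by omega⟩) := by
    ext (i | i) (j | j)
    · rfl
    · exact h _ _ i.isLt (Nat.le_add_right k j)
    · rfl
    · rfl
  rw [← charpoly_reindex e.symm, hblocks, charpoly_fromBlocks_zero₁₂]

end Matrix

theorem mul_transpose_mul_inv_apply_of_rows_eq_pow_mulVec {R : Type*} [CommRing R] {n : ℕ}
    {A X : Matrix (Fin n) (Fin n) R} {v : Fin n → R} {P : R[X]} (hX : IsUnit X.det) (hP : P.Monic)
    (hann : aeval A P *ᵥ v = 0) (hkn : P.natDegree ≤ n)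
    (hrows : ∀ i : Fin n, (i : ℕ) < P.natDegree → X i = (A ^ (i : ℕ)) *ᵥ v)
    (i : Fin n) (hi : (i : ℕ) < P.natDegree) (j : Fin n) :
    (X * Aᵀ * X⁻¹) i j =
      if (j : ℕ) < P.natDegree then
        (if (i : ℕ) = P.natDegree - 1 then -P.coeff j else if (j : ℕ) = i + 1 then 1 else 0)
      else 0 := by
  have hshift : (X * Aᵀ) i = (A ^ ((i : ℕ) + 1)) *ᵥ v := by
    rw [mul_apply_eq_vecMul, vecMul_transpose, hrows i hi, mulVec_mulVec, ← pow_succ']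
  rcases (show (i : ℕ) + 1 ≤ P.natDegree from hi).lt_or_eq with hlt | hlast
  · have hnext : (X * Aᵀ) i = Pi.single ⟨i + 1, by omega⟩ 1 ᵥ* X := by
      rw [single_one_vecMul, row, hrows _ hlt, hshift]
    rw [mul_mul_inv_row_eq hX hnext]
    simp only [Pi.single_apply, Fin.ext_iff]
    split_ifs <;> first | rfl | omega
  · have hrow : (X * Aᵀ) i =
        (fun j : Fin n => if (j : ℕ) < P.natDegree then -P.coeff j else 0) ᵥ* X := by
      rw [hshift, hlast, pow_natDegree_mulVec_eq_neg_sum hP hann, vecMul_eq_sum,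
        ← Finset.sum_neg_distrib, ← Fin.sum_ite_lt_eq_sum_range hkn]
      refine Finset.sum_congr rfl fun j _ => ?_
      split_ifs with hj
      · rw [hrows j hj, neg_smul]
      · rw [zero_smul]
    rw [mul_mul_inv_row_eq hX hrow]
    dsimp only
    split_ifs <;> first | rfl | omega

theorem similarity_block_triangularization (K : Type*) [Field K] (n k : ℕ)
    (hkn : k < n)
    (A : Matrix (Fin n) (Fin n) K) (v : Fin n → K) (P : K[X])
    (hP : P.Monic) (hann : (Polynomial.aeval A P).mulVec v = 0)
    (hdeg : P.natDegree = k)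
    (Xb : Matrix (Fin n) (Fin n) K) (hXb : IsUnit Xb)
    (hrows : ∀ i : Fin n, (i : ℕ) < k → ∀ j, Xb i j = (A ^ (i : ℕ)).mulVec v j) :
    (∀ i j : Fin n, (i : ℕ) < k → k ≤ (j : ℕ) → (Xb * Aᵀ * Xb⁻¹) i j = 0) ∧
    (∀ i j : Fin n, (hi : (i : ℕ) < k) → (hj : (j : ℕ) < k) →
      (Xb * Aᵀ * Xb⁻¹) i j =
        (if (i : ℕ) = k - 1 then -(P.coeff (j : ℕ))
         else if (j : ℕ) = (i : ℕ) + 1 then 1 else 0)) ∧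
    A.charpoly = P *
      (Matrix.of fun (i j : Fin (n - k)) =>
        (Xb * Aᵀ * Xb⁻¹) ⟨k + (i : ℕ), by omega⟩ ⟨k + (j : ℕ), by omega⟩).charpoly := by
  subst hdeg
  have hentry := mul_transpose_mul_inv_apply_of_rows_eq_pow_mulVec
    ((isUnit_iff_isUnit_det Xb).mp hXb) hP hann hkn.le fun i hi => funext (hrows i hi)
  have hzero : ∀ i j : Fin n, (i : ℕ) < P.natDegree → P.natDegree ≤ (j : ℕ) →
      (Xb * Aᵀ * Xb⁻¹) i j = 0 := fun i j hi hj => by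
    rw [hentry i hi j, if_neg (not_lt.mpr hj)]
  have hcompanion : ∀ i j : Fin n, (i : ℕ) < P.natDegree → (j : ℕ) < P.natDegree →
      (Xb * Aᵀ * Xb⁻¹) i j = (if (i : ℕ) = P.natDegree - 1 then -(P.coeff (j : ℕ))
         else if (j : ℕ) = (i : ℕ) + 1 then 1 else 0) := fun i j hi hj => by
    rw [hentry i hi j, if_pos hj]
  refine ⟨hzero, hcompanion, ?_⟩
  have htopLeft : (Matrix.of fun i j : Fin P.natDegree =>
      (Xb * Aᵀ * Xb⁻¹) ⟨i, by omega⟩ ⟨j, by omega⟩) = P.companionᵀ := by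
    ext i j
    rw [of_apply, hcompanion _ _ i.isLt j.isLt, transpose_apply, companion, of_apply]
    dsimp only
    split_ifs <;> first | rfl | omega
  calc A.charpoly = (Xb * Aᵀ * Xb⁻¹).charpoly := by
        rw [← hXb.unit_spec, charpoly_units_conj, charpoly_transpose]
    _ = P.companionᵀ.charpoly * _ := by
        rw [charpoly_eq_mul_of_upper_right_eq_zero hkn.le _ hzero, htopLeft]
    _ = _ := by rw [charpoly_transpose, charpoly_companion hP]
end

section
/- Let A ∈ K^{n×n} and suppose the n×n Krylov matrix K_{A,v} (columns v, Av, ..., A^{n-1}v) of some vector v has rank k, and its transpose admits an LSP decomposition K_{A,v}^T = L·S·P with L unit lower triangular, S such that its first k rows S_1 (a k×n matrix in echelon/triangular shape with nonzero pivots) span the row space and its last n−k rows are zero, and P a permutation matrix. Then the row vector m = L_{k+1,1..k} · (L_{1..k,1..k})^{-1} satisfies (A^k v)^T = m · K', where K' is the k×n matrix with rows (A^i v)^T for 0 ≤ i ≤ k−1; hence the minimal polynomial of the sequence (A^i v) is X^k − Σ_{i=0}^{k-1} m_{i+1} X^i. -/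
open Polynomial Matrix

/-! Since `S` vanishes from row `k` on, `Krᵀ = L₁ * S₁` with `L₁` the first `k` columns of `L` and
`S₁` the first `k` rows of `S * P`. The leading `k × k` block `L'` of `L` is unit lower triangular,
so the first `k` rows of `Krᵀ` give `S₁ = L'⁻¹ * K'`, and row `k` becomes
`(A ^ k v)ᵀ = ℓ * L'⁻¹ * K' = m * K'`.
Conversely, if a monic `R` of degree `d` annihilates `v`, then `A ^ j v = (X ^ j %ₘ R)(A) v` lies in
the span of `v, …, A ^ (d - 1) v`, so `k = rank Kr ≤ d`. -/

section Krylov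

variable {R : Type*} [CommRing R] {n : Type*} [Fintype n] [DecidableEq n]

lemma aeval_mulVec_mem_span_pow_mulVec (A : Matrix n n R) (v : n → R) {q : R[X]} {d : ℕ}
    (hq : q.degree < d) :
    aeval A q *ᵥ v ∈ Submodule.span R (Set.range fun i : Fin d => A ^ (i : ℕ) *ᵥ v) := by
  rw [q.as_sum_support, map_sum, sum_mulVec]
  refine Submodule.sum_mem _ fun i hi => ?_
  have hid : i < d := by exact_mod_cast (le_degree_of_mem_supp i hi).trans_lt hq
  rw [aeval_monomial, ← Algebra.smul_def, smul_mulVec]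
  exact Submodule.smul_mem _ _ (Submodule.subset_span ⟨⟨i, hid⟩, rfl⟩)

lemma pow_mulVec_mem_span_of_aeval_mulVec_eq_zero [Nontrivial R] (A : Matrix n n R) (v : n → R)
    {p : R[X]} (hp : p.Monic) (hpv : aeval A p *ᵥ v = 0) (j : ℕ) :
    A ^ j *ᵥ v ∈ Submodule.span R (Set.range fun i : Fin p.natDegree => A ^ (i : ℕ) *ᵥ v) := by
  have hmod : A ^ j *ᵥ v = aeval A (X ^ j %ₘ p) *ᵥ v := by
    conv_lhs => rw [← aeval_X_pow (R := R), ← modByMonic_add_div (X ^ j) p]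
    rw [mul_comm, map_add, map_mul, add_mulVec, ← mulVec_mulVec, hpv, mulVec_zero, add_zero]
  rw [hmod]
  exact aeval_mulVec_mem_span_pow_mulVec A v
    ((degree_modByMonic_lt _ hp).trans_eq (degree_eq_natDegree hp.ne_zero))

end Krylov

lemma finrank_span_pow_mulVec_le_natDegree {K : Type*} [Field K] {n : Type*} [Fintype n]
    [DecidableEq n] (A : Matrix n n K) (v : n → K) {p : K[X]} (hp : p.Monic)
    (hpv : aeval A p *ᵥ v = 0) :
    Module.finrank K (Submodule.span K (Set.range fun j : ℕ => A ^ j *ᵥ v)) ≤ p.natDegree :=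
  calc _ ≤ Module.finrank K
        (Submodule.span K (Set.range fun i : Fin p.natDegree => A ^ (i : ℕ) *ᵥ v)) :=
        Submodule.finrank_mono <| Submodule.span_le.2 <| Set.range_subset_iff.2 <|
          pow_mulVec_mem_span_of_aeval_mulVec_eq_zero A v hp hpv
    _ ≤ p.natDegree := (finrank_range_le_card _).trans_eq (Fintype.card_fin _)

section Factorization

variable {R : Type*} [CommRing R] {m n o k : Type*} [Fintype n] [Fintype k]

lemma mul_eq_submatrix_mul_submatrix (L : Matrix m n R) (N : Matrix n o R) {e : k → n}
    (he : e.Injective) (hN : ∀ t ∉ Set.range e, N t = 0) :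
    L * N = L.submatrix id e * N.submatrix e id := by
  ext i j
  exact (Fintype.sum_of_injective e he _ _ (fun t ht => by simp [hN t ht]) fun _ => rfl).symm

lemma mul_apply_eq_vecMul_inv_vecMul_submatrix [DecidableEq k] (B : Matrix m k R)
    (C : Matrix k o R) {e : k → m} (hB : IsUnit (B.submatrix e id).det) (r : m) :
    (B * C) r = (B r ᵥ* (B.submatrix e id)⁻¹) ᵥ* (B * C).submatrix e id := by
  rw [mul_apply_eq_vecMul, vecMul_vecMul, submatrix_mul _ _ e id id Function.bijective_id,
    submatrix_id_id, nonsing_inv_mul_cancel_left _ C hB]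

lemma det_submatrix_eq_one_of_unit_lowerTriangular {ι κ : Type*} [LinearOrder ι] [LinearOrder κ]
    [Fintype κ] {L : Matrix ι ι R} (hL : L.IsLowerTriangular)
    (hL1 : ∀ i, L i i = 1) {e : κ → ι} (he : StrictMono e) : (L.submatrix e e).det = 1 := by
  rw [det_of_isLowerTriangular (L.submatrix e e) fun i j hij => hL (he hij)]
  exact Finset.prod_eq_one fun i _ => hL1 (e i)

end Factorization

theorem lsp_minpoly_general (K : Type*) [Field K] (n k : ℕ) (hkn : k < n)
    (A : Matrix (Fin n) (Fin n) K) (v : Fin n → K)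
    (Kr : Matrix (Fin n) (Fin n) K)
    (hKr : ∀ i j, Kr i j = (A ^ (j : ℕ)).mulVec v i)
    (hrank : Kr.rank = k)
    (L S : Matrix (Fin n) (Fin n) K) (σ : Equiv.Perm (Fin n))
    (hL1 : ∀ i, L i i = 1)
    (hL0 : ∀ i j : Fin n, (i : ℕ) < (j : ℕ) → L i j = 0)
    (hS0 : ∀ i j : Fin n, k ≤ (i : ℕ) → S i j = 0)
    (hLSP : Krᵀ = L * S * σ.permMatrix K)
    (m : Fin k → K)
    (hm : m = Matrix.vecMul (fun j : Fin k => L ⟨k, hkn⟩ (Fin.castLE hkn.le j))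
      (Matrix.of fun i j : Fin k => L (Fin.castLE hkn.le i) (Fin.castLE hkn.le j))⁻¹) :
    (∀ j : Fin n, (A ^ k).mulVec v j = ∑ i : Fin k, m i * (A ^ (i : ℕ)).mulVec v j) ∧
    ((Polynomial.aeval A
        (X ^ k - ∑ i : Fin k, Polynomial.C (m i) * X ^ (i : ℕ))).mulVec v = 0) ∧
    (∀ R : K[X], R.Monic → (Polynomial.aeval A R).mulVec v = 0 → k ≤ R.natDegree) := by
  set e : Fin k → Fin n := Fin.castLE hkn.le
  have hKrT : ∀ j, Krᵀ j = A ^ (j : ℕ) *ᵥ v := fun j => funext fun i => hKr i j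
  have hSP : ∀ t ∉ Set.range e, (S * σ.permMatrix K) t = 0 := by
    intro t ht
    have hkt : k ≤ (t : ℕ) := not_lt.1 fun h => ht ⟨⟨t, h⟩, rfl⟩
    ext j
    simp [mul_apply, hS0 t _ hkt]
  have hfac : Krᵀ = L.submatrix id e * (S * σ.permMatrix K).submatrix e id := by
    rw [hLSP, Matrix.mul_assoc, mul_eq_submatrix_mul_submatrix _ _ (Fin.castLE_injective _) hSP]
  have hdet : IsUnit (L.submatrix e e).det := by
    rw [det_submatrix_eq_one_of_unit_lowerTriangular (fun i j hij => hL0 i j hij) hL1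
      (Fin.strictMono_castLE _)]
    exact isUnit_one
  have hrec : A ^ k *ᵥ v = ∑ i : Fin k, m i • A ^ (i : ℕ) *ᵥ v := by
    have hrow : Krᵀ ⟨k, hkn⟩ = m ᵥ* Krᵀ.submatrix e id := by
      rw [hm, hfac]
      exact mul_apply_eq_vecMul_inv_vecMul_submatrix _ _ hdet _
    rw [← hKrT ⟨k, hkn⟩, hrow, vecMul_eq_sum]
    exact Finset.sum_congr rfl fun i _ => congrArg _ (hKrT (e i))
  refine ⟨fun j => by simp [hrec, Finset.sum_apply], ?_, fun R hR hRv => ?_⟩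
  · simp [sub_mulVec, sum_mulVec, ← Algebra.smul_def, smul_mulVec, hrec]
  · calc k = Module.finrank K (Submodule.span K (Set.range Kr.col)) :=
          hrank.symm.trans (rank_eq_finrank_span_cols Kr)
      _ ≤ Module.finrank K (Submodule.span K (Set.range fun j : ℕ => A ^ j *ᵥ v)) :=
          Submodule.finrank_mono <| Submodule.span_mono <|
            Set.range_subset_iff.2 fun j => ⟨j, (hKrT j).symm⟩
      _ ≤ R.natDegree := finrank_span_pow_mulVec_le_natDegree A v hR hRv

theorem lsp_minpoly (K : Type*) [Field K] (n k : ℕ) (hkn : k < n)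
    (A : Matrix (Fin n) (Fin n) K) (v : Fin n → K)
    (Kr : Matrix (Fin n) (Fin n) K)
    (hKr : ∀ i j, Kr i j = (A ^ (j : ℕ)).mulVec v i)
    (hrank : Kr.rank = k)
    (L S : Matrix (Fin n) (Fin n) K) (σ : Equiv.Perm (Fin n))
    (hL1 : ∀ i, L i i = 1)
    (hL0 : ∀ i j : Fin n, (i : ℕ) < (j : ℕ) → L i j = 0)
    (hS0 : ∀ i j : Fin n, k ≤ (i : ℕ) → S i j = 0)
    (hStri : ∀ i j : Fin n, (j : ℕ) < (i : ℕ) → S i j = 0)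
    (hSpiv : ∀ i : Fin n, (i : ℕ) < k → S i i ≠ 0)
    (hLSP : Krᵀ = L * S * σ.permMatrix K)
    (m : Fin k → K)
    (hm : m = Matrix.vecMul (fun j : Fin k => L ⟨k, hkn⟩ (Fin.castLE hkn.le j))
      (Matrix.of fun i j : Fin k => L (Fin.castLE hkn.le i) (Fin.castLE hkn.le j))⁻¹) :
    (∀ j : Fin n, (A ^ k).mulVec v j = ∑ i : Fin k, m i * (A ^ (i : ℕ)).mulVec v j) ∧
    ((Polynomial.aeval A
        (X ^ k - ∑ i : Fin k, Polynomial.C (m i) * X ^ (i : ℕ))).mulVec v = 0) ∧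
    (∀ R : K[X], R.Monic → (Polynomial.aeval A R).mulVec v = 0 → k ≤ R.natDegree) :=
  lsp_minpoly_general K n k hkn A v Kr hKr hrank L S σ hL1 hL0 hS0 hLSP m hm
end

section
/- Let A ∈ K^{n×n} over a field K, and let v_1, ..., v_s ∈ K^n be such that K^n decomposes as a direct sum of the A-invariant subspaces V_j = span{A^i v_j : i ≥ 0}. Let P_j be the minimal polynomial of the sequence (A^i v_j)_i. Then the characteristic polynomial of A equals ∏_{j=1}^s P_j. -/
/-!
Let `f` be the endomorphism `x ↦ A x`. It preserves every `V j`, so in a basis adapted to the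
decomposition its matrix is block diagonal and `χ_A = ∏ j, χ(f|V j)`. On a single cyclic subspace
`V = span {fⁱ v}` with `p` a monic annihilator of `v` of least degree `d`: reducing `Xⁱ` modulo `p`
puts every `fⁱ v` in the span of `v, f v, …, f^(d-1) v`, so `dim V ≤ d`. The minimal polynomial
of `f|V` divides `p` (as `p` kills all `fⁱ v`) and annihilates `v`, so it is `p`; it also divides
`χ(f|V)`, which is monic of degree `dim V ≤ d`, so `χ(f|V) = p`.
-/

open Polynomial Matrix

namespace Matrix

theorem toSquareBlock_blockDiagonal' {ι α : Type*} [DecidableEq ι] [Zero α] {m : ι → Type*}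
    (d : ∀ i, Matrix (m i) (m i) α) (i : ι) :
    (blockDiagonal' d).toSquareBlock Sigma.fst i =
      (d i).submatrix (Equiv.sigmaSubtype i) (Equiv.sigmaSubtype i) := by
  ext ⟨⟨_, x⟩, rfl⟩ ⟨⟨_, y⟩, hy⟩
  cases hy
  simp [toSquareBlock_def, blockDiagonal'_apply_eq]

variable {ι R : Type*} [Fintype ι] [DecidableEq ι] [CommRing R] {m : ι → Type*}
  [∀ i, Fintype (m i)] [∀ i, DecidableEq (m i)]

theorem det_blockDiagonal' (d : ∀ i, Matrix (m i) (m i) R) :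
    (blockDiagonal' d).det = ∏ i, (d i).det := by
  let : LinearOrder ι := LinearOrder.lift' _ (Fintype.equivFin ι).injective
  simp only [(blockTriangular_blockDiagonal' d).det_fintype, toSquareBlock_blockDiagonal',
    det_submatrix_equiv_self]

theorem charmatrix_blockDiagonal' (d : ∀ i, Matrix (m i) (m i) R) :
    charmatrix (blockDiagonal' d) = blockDiagonal' fun i => charmatrix (d i) := by
  simp only [charmatrix, RingHom.mapMatrix_apply, scalar_apply, blockDiagonal'_map _ _ C_0]
  rw [← blockDiagonal'_diagonal fun _ _ => (X : R[X]), ← blockDiagonal'_sub]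
  rfl

theorem charpoly_blockDiagonal' (d : ∀ i, Matrix (m i) (m i) R) :
    (blockDiagonal' d).charpoly = ∏ i, (d i).charpoly := by
  rw [charpoly, charmatrix_blockDiagonal', det_blockDiagonal']
  rfl

end Matrix

theorem LinearMap.charpoly_eq_prod_charpoly_restrict {ι R M : Type*} [Fintype ι] [DecidableEq ι]
    [CommRing R] [AddCommGroup M] [Module R M] [Module.Free R M] [Module.Finite R M]
    {N : ι → Submodule R M} [∀ i, Module.Free R (N i)] [∀ i, Module.Finite R (N i)]
    (h : DirectSum.IsInternal N) {f : Module.End R M} (hf : ∀ i, ∀ x ∈ N i, f x ∈ N i) :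
    f.charpoly = ∏ i, (f.restrict (hf i)).charpoly := by
  let b i := Module.Free.chooseBasis R (N i)
  simp_rw [← charpoly_toMatrix f (h.collectedBasis b),
    toMatrix_directSum_collectedBasis_eq_blockDiagonal' h h b b hf,
    Matrix.charpoly_blockDiagonal', charpoly_toMatrix]

namespace Module.End

theorem aeval_restrict_apply {R M : Type*} [CommSemiring R] [AddCommMonoid M] [Module R M]
    (f : Module.End R M) {p : Submodule R M} (hf : ∀ x ∈ p, f x ∈ p) (q : R[X]) (x : p) :
    (aeval (f.restrict hf) q x : M) = aeval f q x := by
  induction q using Polynomial.induction_on' with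
  | add a b ha hb => simp [ha, hb]
  | monomial k a =>
    simp only [aeval_monomial, Module.End.mul_apply, Module.algebraMap_end_apply,
      Module.End.pow_restrict k hf, Submodule.coe_smul, LinearMap.restrict_apply]

section CommRing

variable {R M : Type*} [CommRing R] [AddCommGroup M] [Module R M]

def cyclicSubspace (f : Module.End R M) (v : M) : Submodule R M :=
  Submodule.span R (Set.range fun i : ℕ => (f ^ i) v)

variable {f : Module.End R M} {v : M}

theorem pow_apply_mem_cyclicSubspace (i : ℕ) : (f ^ i) v ∈ cyclicSubspace f v :=
  Submodule.subset_span ⟨i, rfl⟩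

theorem mapsTo_cyclicSubspace (f : Module.End R M) (v : M) :
    ∀ x ∈ cyclicSubspace f v, f x ∈ cyclicSubspace f v := by
  suffices cyclicSubspace f v ≤ (cyclicSubspace f v).comap f from fun x hx => this hx
  refine Submodule.span_le.mpr ?_
  rintro _ ⟨i, rfl⟩
  have h := pow_apply_mem_cyclicSubspace (f := f) (v := v) (i + 1)
  rw [pow_succ', Module.End.mul_apply] at h
  exact h

theorem cyclicSubspace_le_ker_aeval {q : R[X]} (hq : aeval f q v = 0) :
    cyclicSubspace f v ≤ LinearMap.ker (aeval f q) := by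
  refine Submodule.span_le.mpr ?_
  rintro _ ⟨i, rfl⟩
  have hcomm := ((Commute.all q (X ^ i)).map (aeval f)).eq
  rw [map_pow, aeval_X] at hcomm
  rw [SetLike.mem_coe, LinearMap.mem_ker, ← Module.End.mul_apply, hcomm, Module.End.mul_apply, hq,
    map_zero]

theorem aeval_modByMonic_apply_of_aeval_apply_eq_zero {p : R[X]} (hpv : aeval f p v = 0)
    (q : R[X]) : aeval f (q %ₘ p) v = aeval f q v := by
  conv_rhs => rw [← modByMonic_add_div q p, mul_comm p]
  simp [Module.End.mul_apply, hpv]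

end CommRing

section Field

variable {K M : Type*} [Field K] [AddCommGroup M] [Module K M] {f : Module.End K M} {v : M} {p : K[X]}

theorem finrank_cyclicSubspace_le (hp : p.Monic) (hpv : aeval f p v = 0) :
    Module.finrank K (cyclicSubspace f v) ≤ p.natDegree := by
  let evalAt : K[X] →ₗ[K] M := (LinearMap.applyₗ v).comp (aeval f).toLinearMap
  have hle : cyclicSubspace f v ≤ (degreeLT K p.natDegree).map evalAt := by
    refine Submodule.span_le.mpr ?_
    rintro _ ⟨i, rfl⟩
    refine ⟨X ^ i %ₘ p, mem_degreeLT.mpr ?_, ?_⟩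
    · exact degree_eq_natDegree hp.ne_zero ▸ degree_modByMonic_lt _ hp
    · simp [evalAt, aeval_modByMonic_apply_of_aeval_apply_eq_zero hpv]
  calc Module.finrank K (cyclicSubspace f v)
      ≤ Module.finrank K ((degreeLT K p.natDegree).map evalAt) := Submodule.finrank_mono hle
    _ ≤ Module.finrank K (degreeLT K p.natDegree) := Submodule.finrank_map_le _ _
    _ = p.natDegree := by simp [(degreeLTEquiv K p.natDegree).finrank_eq]

variable [FiniteDimensional K M]

theorem minpoly_restrict_cyclicSubspace (hp : p.Monic) (hpv : aeval f p v = 0)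
    (hmin : ∀ q : K[X], q.Monic → aeval f q v = 0 → p.natDegree ≤ q.natDegree) :
    minpoly K (f.restrict (mapsTo_cyclicSubspace f v)) = p := by
  set g := f.restrict (mapsTo_cyclicSubspace f v)
  have hv : v ∈ cyclicSubspace f v := by simpa using pow_apply_mem_cyclicSubspace (f := f) 0
  have hgp : aeval g p = 0 := LinearMap.ext fun x => Subtype.ext <| by
    simpa [g, aeval_restrict_apply] using cyclicSubspace_le_ker_aeval hpv x.2
  have hgv : aeval f (minpoly K g) v = 0 := by
    rw [← aeval_restrict_apply f (mapsTo_cyclicSubspace f v) _ ⟨v, hv⟩, minpoly.aeval]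
    rfl
  have hg : (minpoly K g).Monic := minpoly.monic (Algebra.IsIntegral.isIntegral g)
  exact (eq_of_monic_of_dvd_of_natDegree_le hg hp (minpoly.dvd K g hgp) (hmin _ hg hgv)).symm

theorem charpoly_restrict_cyclicSubspace (hp : p.Monic) (hpv : aeval f p v = 0)
    (hmin : ∀ q : K[X], q.Monic → aeval f q v = 0 → p.natDegree ≤ q.natDegree) :
    (f.restrict (mapsTo_cyclicSubspace f v)).charpoly = p := by
  set g := f.restrict (mapsTo_cyclicSubspace f v)
  have hg : minpoly K g = p := minpoly_restrict_cyclicSubspace hp hpv hmin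
  refine hg ▸ eq_of_monic_of_dvd_of_natDegree_le (minpoly.monic (Algebra.IsIntegral.isIntegral g))
    g.charpoly_monic g.minpoly_dvd_charpoly ?_
  rw [g.charpoly_natDegree, hg]
  exact finrank_cyclicSubspace_le hp hpv

end Field

end Module.End

theorem charpoly_eq_prod_of_cyclic_decomposition (K : Type*) [Field K] (n s : ℕ)
    (A : Matrix (Fin n) (Fin n) K) (v : Fin s → (Fin n → K))
    (V : Fin s → Submodule K (Fin n → K))
    (hV : ∀ j, V j = Submodule.span K (Set.range fun i : ℕ => (A ^ i).mulVec (v j)))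
    (hdirect : DirectSum.IsInternal V)
    (P : Fin s → K[X])
    (hmono : ∀ j, (P j).Monic)
    (hann : ∀ j, (Polynomial.aeval A (P j)).mulVec (v j) = 0)
    (hmin : ∀ j, ∀ Q : K[X], Q.Monic → (Polynomial.aeval A Q).mulVec (v j) = 0 →
      (P j).natDegree ≤ Q.natDegree) :
    A.charpoly = ∏ j, P j := by
  set f := Matrix.toLinAlgEquiv' A
  have haeval (q : K[X]) (x : Fin n → K) : (aeval A q).mulVec x = aeval f q x := by
    rw [aeval_algEquiv, AlgHom.comp_apply]
    rfl
  have hpow (i : ℕ) (x : Fin n → K) : (A ^ i).mulVec x = (f ^ i) x := by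
    simpa using haeval (X ^ i) x
  obtain rfl : V = fun j => Module.End.cyclicSubspace f (v j) := by
    funext j
    simp only [hV, Module.End.cyclicSubspace, hpow]
  have hcharpoly : A.charpoly = f.charpoly := (Matrix.charpoly_toLin' A).symm
  rw [hcharpoly, LinearMap.charpoly_eq_prod_charpoly_restrict hdirect
    fun j => Module.End.mapsTo_cyclicSubspace f (v j)]
  exact Finset.prod_congr rfl fun j _ => Module.End.charpoly_restrict_cyclicSubspace (hmono j)
    (haeval _ _ ▸ hann j) fun Q hQ hQv => hmin j Q hQ ((haeval _ _).trans hQv)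
end
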